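/- With the setup of the edge-rotation theorem (G connected with Perron vector x, G* obtained by deleting edges v v_i for 1 ≤ i ≤ k and adding edges v v_j for k+1 ≤ j ≤ k+l), suppose additionally that G* is connected with Perron vector y. If x_1 + ... + x_k ≤ x_{k+1} + ... + x_{k+l}, then y_{k+1} + ... + y_{k+l} ≥ y_1 + ... + y_k; moreover, if the first inequality is strict, so is the second. -/

import Mathlib

open Finset Matrix

noncomputable def specRad {n : ℕ} (G : SimpleGraph (Fin n)) : ℝ :=
  letI : DecidableRel G.Adj := Classical.decRel _
  sSup (spectrum ℝ (G.adjMatrix ℝ))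

noncomputable def adjMat {n : ℕ} (G : SimpleGraph (Fin n)) : Matrix (Fin n) (Fin n) ℝ :=
  letI : DecidableRel G.Adj := Classical.decRel _
  G.adjMatrix ℝ

noncomputable def minDeg {n : ℕ} (G : SimpleGraph (Fin n)) : ℕ :=
  letI : DecidableRel G.Adj := Classical.decRel _
  G.minDegree

/-- `x` is a Perron vector of `G`: a positive unit eigenvector for the spectral radius. -/
def IsPerronVector {n : ℕ} (G : SimpleGraph (Fin n)) (x : Fin n → ℝ) : Prop :=
  (∀ i, 0 < x i) ∧ (∑ i, x i ^ 2 = 1) ∧ (adjMat G).mulVec x = specRad G • x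

/-- Removing the vertex set `S` disconnects `G`. -/
def Disconnects {n : ℕ} (G : SimpleGraph (Fin n)) (S : Finset (Fin n)) : Prop :=
  ¬ (G.induce ((↑(Sᶜ) : Set (Fin n)))).Preconnected

/-- `G` is `m`-connected: `G` is the complete graph on `m+1` vertices, or `G` has at least
`m+2` vertices and no vertex cut of size at most `m-1`. -/
def IsKConnected {n : ℕ} (G : SimpleGraph (Fin n)) (m : ℕ) : Prop :=
  (n = m + 1 ∧ G = ⊤) ∨
    (m + 2 ≤ n ∧ ∀ S : Finset (Fin n), S.card ≤ m - 1 → ¬ Disconnects G S)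

/-- The graph `K_k + (K_{δ-k+1} ∪ K_{n-δ-1})`: vertices `0,…,k-1` are joined to everything,
vertices `k,…,δ` form one clique and vertices `δ+1,…,n-1` the other. -/
def Gkdn (k δ n : ℕ) : SimpleGraph (Fin n) where
  Adj a b := a ≠ b ∧ ((a : ℕ) < k ∨ (b : ℕ) < k ∨ ((a : ℕ) ≤ δ ∧ (b : ℕ) ≤ δ) ∨
    (δ < (a : ℕ) ∧ δ < (b : ℕ)))
  symm := by constructor; intro a b h; exact ⟨h.1.symm, by tauto⟩
  loopless := by constructor; intro a h; exact h.1 rfl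

open Classical in
lemma adjMat_apply {n : ℕ} (G : SimpleGraph (Fin n)) (a b : Fin n) :
    adjMat G a b = if G.Adj a b then 1 else 0 := by
  unfold adjMat
  simp [SimpleGraph.adjMatrix_apply]

lemma adjMat_symm {n : ℕ} (G : SimpleGraph (Fin n)) (a b : Fin n) :
    adjMat G a b = adjMat G b a := by
  classical
  rw [adjMat_apply, adjMat_apply, G.adj_comm]

lemma adjMat_nonneg {n : ℕ} (G : SimpleGraph (Fin n)) (a b : Fin n) :
    0 ≤ adjMat G a b := by
  classical
  rw [adjMat_apply]; split <;> norm_num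

/-- Elementary Rayleigh bound for a symmetric nonnegative matrix with a positive eigenvector. -/
lemma rayleigh_le {n : ℕ} (A : Matrix (Fin n) (Fin n) ℝ)
    (hsym : ∀ i j, A i j = A j i) (hnn : ∀ i j, 0 ≤ A i j)
    (x : Fin n → ℝ) (hx : ∀ i, 0 < x i) (ρ : ℝ) (hAx : A.mulVec x = ρ • x)
    (z : Fin n → ℝ) : z ⬝ᵥ A.mulVec z ≤ ρ * ∑ i, z i ^ 2 := by
  set c : Fin n → ℝ := fun i => z i / x i with hc
  have hz : ∀ i, z i = c i * x i := by
    intro i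
    rw [hc]
    show z i = z i / x i * x i
    exact (div_mul_cancel₀ (z i) (hx i).ne').symm
  have hrow : ∀ i, ∑ j, A i j * x j = ρ * x i := by
    intro i
    have := congrFun hAx i
    simpa [Matrix.mulVec, dotProduct] using this
  have e1 : z ⬝ᵥ A.mulVec z = ∑ i, ∑ j, z i * (A i j * z j) := by
    simp [dotProduct, Matrix.mulVec, Finset.mul_sum]
  rw [e1]
  have step1 : ∑ i, ∑ j, z i * (A i j * z j)
      ≤ ∑ i, ∑ j, A i j * x i * x j * ((c i ^ 2 + c j ^ 2) / 2) := by
    apply Finset.sum_le_sum; intro i _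
    apply Finset.sum_le_sum; intro j _
    rw [hz i, hz j]
    have h1 : 0 ≤ A i j * x i * x j :=
      mul_nonneg (mul_nonneg (hnn i j) (hx i).le) (hx j).le
    nlinarith [sq_nonneg (c i - c j)]
  refine step1.trans (le_of_eq ?_)
  have split : ∀ i j : Fin n, A i j * x i * x j * ((c i ^ 2 + c j ^ 2) / 2)
      = A i j * x i * x j * c i ^ 2 / 2 + A i j * x i * x j * c j ^ 2 / 2 := by
    intro i j; ring
  simp_rw [split, Finset.sum_add_distrib]
  have swap : ∑ i, ∑ j, A i j * x i * x j * c j ^ 2 / 2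
      = ∑ i, ∑ j, A i j * x i * x j * c i ^ 2 / 2 := by
    rw [Finset.sum_comm]
    refine Finset.sum_congr rfl fun i _ => Finset.sum_congr rfl fun j _ => ?_
    rw [hsym j i]; ring
  rw [swap, ← two_mul]
  have e2 : ∀ i, ∑ j, A i j * x i * x j * c i ^ 2 / 2
      = (x i * c i ^ 2 / 2) * ∑ j, A i j * x j := by
    intro i; rw [Finset.mul_sum]; exact Finset.sum_congr rfl fun j _ => by ring
  simp_rw [e2, hrow]
  have goalr : ρ * ∑ i, z i ^ 2 = ∑ i, ρ * z i ^ 2 := by simp [Finset.mul_sum]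
  rw [goalr]
  have e3 : ∀ i, x i * c i ^ 2 / 2 * (ρ * x i) = ρ * z i ^ 2 / 2 := fun i => by rw [hz i]; ring
  simp_rw [e3]
  rw [← Finset.sum_div]
  ring

/-- the double-sum of an indicator of a single ordered pair -/
lemma pair_sum {n : ℕ} (p q : Fin n) (f : Fin n → Fin n → ℝ) :
    (∑ a : Fin n, ∑ b : Fin n, if a = p ∧ b = q then f a b else 0) = f p q := by
  rw [Finset.sum_eq_single p]
  · rw [Finset.sum_eq_single q]
    · simp
    · intro b _ hb; simp [hb]
    · intro h; exact absurd (Finset.mem_univ q) h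
  · intro a _ ha
    exact Finset.sum_eq_zero fun b _ => by simp [ha]
  · intro h; exact absurd (Finset.mem_univ p) h

lemma single_edge {n : ℕ} (v u : Fin n) (huv : u ≠ v) (ε : ℝ) (z : Fin n → ℝ) :
    (∑ a : Fin n, ∑ b : Fin n, z a * ((if s(a,b) = s(v,u) then ε else 0) * z b))
      = ε * (2 * (z v * z u)) := by
  classical
  have hsplit : ∀ a b : Fin n, z a * ((if s(a,b) = s(v,u) then ε else 0) * z b)
      = (if a = v ∧ b = u then z a * (ε * z b) else 0)
        + (if a = u ∧ b = v then z a * (ε * z b) else 0) := by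
    intro a b
    by_cases h1 : a = v ∧ b = u
    · have h2 : ¬(a = u ∧ b = v) := fun h2 => huv (h2.1.symm.trans h1.1)
      have hs : s(a,b) = s(v,u) := Sym2.eq_iff.mpr (Or.inl h1)
      simp [h1, h2, hs]
      exact fun h _ => absurd h.symm huv
    · by_cases h2 : a = u ∧ b = v
      · have hs : s(a,b) = s(v,u) := Sym2.eq_iff.mpr (Or.inr h2)
        simp [h1, h2, hs]
        exact fun h _ => absurd h huv
      · have hs : ¬ s(a,b) = s(v,u) := by rw [Sym2.eq_iff]; tauto
        simp [h1, h2, hs]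
  simp_rw [hsplit, Finset.sum_add_distrib]
  rw [pair_sum v u (fun a b => z a * (ε * z b)), pair_sum u v (fun a b => z a * (ε * z b))]
  ring

lemma quad_diff {n k l : ℕ} (G : SimpleGraph (Fin n))
    (v : Fin n) (w : Fin (k + l) ↪ Fin n) (hwv : ∀ i, w i ≠ v)
    (hnbr : ∀ i : Fin (k + l), (i : ℕ) < k → G.Adj v (w i))
    (hnon : ∀ i : Fin (k + l), k ≤ (i : ℕ) → ¬ G.Adj v (w i))
    (Gs : SimpleGraph (Fin n))
    (hGs : ∀ a b, Gs.Adj a b ↔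
      ((G.Adj a b ∧ ∀ i : Fin (k + l), (i : ℕ) < k → s(a, b) ≠ s(v, w i)) ∨
        ∃ i : Fin (k + l), k ≤ (i : ℕ) ∧ s(a, b) = s(v, w i)))
    (z : Fin n → ℝ) :
    z ⬝ᵥ (adjMat Gs).mulVec z = z ⬝ᵥ (adjMat G).mulVec z
      + 2 * z v * ((∑ i ∈ univ.filter (fun i : Fin (k + l) => k ≤ (i : ℕ)), z (w i))
        - (∑ i ∈ univ.filter (fun i : Fin (k + l) => (i : ℕ) < k), z (w i))) := by
  classical
  have adjiff : ∀ (a b u : Fin n), s(a,b) = s(v,u) → (G.Adj a b ↔ G.Adj v u) := by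
    intro a b u h
    rcases Sym2.eq_iff.mp h with ⟨rfl, rfl⟩ | ⟨rfl, rfl⟩
    · exact Iff.rfl
    · exact G.adj_comm _ _
  have entry : ∀ a b : Fin n, adjMat Gs a b = adjMat G a b
      + ∑ i : Fin (k + l), (if s(a,b) = s(v, w i) then (if k ≤ (i:ℕ) then (1:ℝ) else -1) else 0) := by
    intro a b
    by_cases hm : ∃ i : Fin (k + l), s(a,b) = s(v, w i)
    · obtain ⟨i₀, hi₀⟩ := hm
      have huniq : ∀ i : Fin (k + l), s(a,b) = s(v, w i) → i = i₀ := by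
        intro i hi
        exact w.injective (Sym2.congr_right.mp (hi.symm.trans hi₀))
      have hsum : (∑ i : Fin (k + l), (if s(a,b) = s(v, w i) then (if k ≤ (i:ℕ) then (1:ℝ) else -1) else 0))
          = (if k ≤ (i₀:ℕ) then (1:ℝ) else -1) := by
        rw [Finset.sum_eq_single i₀]
        · simp [hi₀]
        · intro i _ hne
          have : ¬ s(a,b) = s(v, w i) := fun h => hne (huniq i h)
          simp [this]
        · intro h; exact absurd (Finset.mem_univ i₀) h
      rw [hsum]
      have hGab := adjiff a b (w i₀) hi₀
      by_cases hk : k ≤ (i₀:ℕ)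
      · have h1 : Gs.Adj a b := (hGs a b).mpr (Or.inr ⟨i₀, hk, hi₀⟩)
        have h2 : ¬ G.Adj a b := fun h => hnon i₀ hk (hGab.mp h)
        rw [adjMat_apply, adjMat_apply]
        simp [h1, h2, hk]
      · push_neg at hk
        have h2 : G.Adj a b := hGab.mpr (hnbr i₀ hk)
        have h1 : ¬ Gs.Adj a b := by
          intro h
          rcases (hGs a b).mp h with ⟨_, hall⟩ | ⟨i, hik, hi⟩
          · exact hall i₀ hk hi₀
          · exact absurd (huniq i hi ▸ hik) (not_le.mpr hk)
        rw [adjMat_apply, adjMat_apply]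
        simp [h1, h2, not_le.mpr hk]
    · push_neg at hm
      have hsum : (∑ i : Fin (k + l), (if s(a,b) = s(v, w i) then (if k ≤ (i:ℕ) then (1:ℝ) else -1) else 0)) = 0 :=
        Finset.sum_eq_zero fun i _ => by simp [hm i]
      rw [hsum]
      have hiff : Gs.Adj a b ↔ G.Adj a b := by
        rw [hGs a b]
        constructor
        · rintro (⟨h, _⟩ | ⟨i, _, hi⟩)
          · exact h
          · exact absurd hi (hm i)
        · intro h; exact Or.inl ⟨h, fun i _ => hm i⟩
      rw [adjMat_apply, adjMat_apply, hiff, add_zero]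
  have dot : ∀ M : Matrix (Fin n) (Fin n) ℝ, z ⬝ᵥ M.mulVec z = ∑ a, ∑ b, z a * (M a b * z b) := by
    intro M
    simp [dotProduct, Matrix.mulVec, Finset.mul_sum]
  rw [dot, dot]
  simp_rw [entry]
  have expand : ∀ a b : Fin n, z a * ((adjMat G a b
      + ∑ i : Fin (k + l), (if s(a,b) = s(v, w i) then (if k ≤ (i:ℕ) then (1:ℝ) else -1) else 0)) * z b)
      = z a * (adjMat G a b * z b)
        + ∑ i : Fin (k + l), z a * ((if s(a,b) = s(v, w i) then (if k ≤ (i:ℕ) then (1:ℝ) else -1) else 0) * z b) := by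
    intro a b
    rw [add_mul, mul_add, Finset.sum_mul, Finset.mul_sum]
  simp_rw [expand, Finset.sum_add_distrib]
  congr 1
  -- remaining: triple sum equals the RHS correction term
  have swap1 : (∑ a : Fin n, ∑ b : Fin n, ∑ i : Fin (k + l),
        z a * ((if s(a,b) = s(v, w i) then (if k ≤ (i:ℕ) then (1:ℝ) else -1) else 0) * z b))
      = ∑ i : Fin (k + l), ∑ a : Fin n, ∑ b : Fin n,
        z a * ((if s(a,b) = s(v, w i) then (if k ≤ (i:ℕ) then (1:ℝ) else -1) else 0) * z b) := by
    have inner : ∀ a : Fin n, (∑ b : Fin n, ∑ i : Fin (k + l),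
          z a * ((if s(a,b) = s(v, w i) then (if k ≤ (i:ℕ) then (1:ℝ) else -1) else 0) * z b))
        = ∑ i : Fin (k + l), ∑ b : Fin n,
          z a * ((if s(a,b) = s(v, w i) then (if k ≤ (i:ℕ) then (1:ℝ) else -1) else 0) * z b) :=
      fun a => Finset.sum_comm
    simp_rw [inner]
    exact Finset.sum_comm
  rw [swap1]
  have peri : ∀ i : Fin (k + l), (∑ a : Fin n, ∑ b : Fin n,
        z a * ((if s(a,b) = s(v, w i) then (if k ≤ (i:ℕ) then (1:ℝ) else -1) else 0) * z b))
      = (if k ≤ (i:ℕ) then (1:ℝ) else -1) * (2 * (z v * z (w i))) :=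
    fun i => single_edge v (w i) (hwv i) _ z
  simp_rw [peri]
  rw [Finset.sum_filter, Finset.sum_filter, ← Finset.sum_sub_distrib, Finset.mul_sum]
  refine Finset.sum_congr rfl fun i _ => ?_
  by_cases hk : k ≤ (i:ℕ)
  · simp only [hk, if_pos, if_neg (by omega : ¬ (i:ℕ) < k)]
    ring
  · simp only [if_neg hk, if_pos (by omega : (i:ℕ) < k)]
    ring

theorem perron_of_rotation {n k l : ℕ} (G : SimpleGraph (Fin n)) (hG : G.Connected)
    (x : Fin n → ℝ) (hx : IsPerronVector G x)
    (v : Fin n) (w : Fin (k + l) ↪ Fin n) (hwv : ∀ i, w i ≠ v)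
    (hnbr : ∀ i : Fin (k + l), (i : ℕ) < k → G.Adj v (w i))
    (hnon : ∀ i : Fin (k + l), k ≤ (i : ℕ) → ¬ G.Adj v (w i))
    (Gs : SimpleGraph (Fin n))
    (hGs : ∀ a b, Gs.Adj a b ↔
      ((G.Adj a b ∧ ∀ i : Fin (k + l), (i : ℕ) < k → s(a, b) ≠ s(v, w i)) ∨
        ∃ i : Fin (k + l), k ≤ (i : ℕ) ∧ s(a, b) = s(v, w i)))
    (hGsconn : Gs.Connected) (y : Fin n → ℝ) (hy : IsPerronVector Gs y)
    (hsum : (∑ i ∈ univ.filter (fun i : Fin (k + l) => (i : ℕ) < k), x (w i)) ≤ (∑ i ∈ univ.filter (fun i : Fin (k + l) => k ≤ (i : ℕ)), x (w i))) :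
    (∑ i ∈ univ.filter (fun i : Fin (k + l) => (i : ℕ) < k), y (w i)) ≤ (∑ i ∈ univ.filter (fun i : Fin (k + l) => k ≤ (i : ℕ)), y (w i)) ∧
      ((∑ i ∈ univ.filter (fun i : Fin (k + l) => (i : ℕ) < k), x (w i)) < (∑ i ∈ univ.filter (fun i : Fin (k + l) => k ≤ (i : ℕ)), x (w i)) →
        (∑ i ∈ univ.filter (fun i : Fin (k + l) => (i : ℕ) < k), y (w i)) < (∑ i ∈ univ.filter (fun i : Fin (k + l) => k ≤ (i : ℕ)), y (w i))) := by
  classical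
  obtain ⟨hxpos, hxnorm, hxeig⟩ := hx
  obtain ⟨hypos, hynorm, hyeig⟩ := hy
  set ρ := specRad G with hρ
  set σ := specRad Gs with hσ
  have xAx : x ⬝ᵥ (adjMat G).mulVec x = ρ := by
    rw [hxeig, dotProduct_smul]
    have hxx : x ⬝ᵥ x = 1 := by rw [← hxnorm]; simp [dotProduct, sq]
    rw [hxx, smul_eq_mul, mul_one]
  have yBy : y ⬝ᵥ (adjMat Gs).mulVec y = σ := by
    rw [hyeig, dotProduct_smul]
    have hyy : y ⬝ᵥ y = 1 := by rw [← hynorm]; simp [dotProduct, sq]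
    rw [hyy, smul_eq_mul, mul_one]
  have r1 : x ⬝ᵥ (adjMat Gs).mulVec x ≤ σ := by
    have h := rayleigh_le (adjMat Gs) (adjMat_symm Gs) (adjMat_nonneg Gs) y hypos σ hyeig x
    rwa [hxnorm, mul_one] at h
  have r2 : y ⬝ᵥ (adjMat G).mulVec y ≤ ρ := by
    have h := rayleigh_le (adjMat G) (adjMat_symm G) (adjMat_nonneg G) x hxpos ρ hxeig y
    rwa [hynorm, mul_one] at h
  have dX := quad_diff G v w hwv hnbr hnon Gs hGs x
  have dY := quad_diff G v w hwv hnbr hnon Gs hGs y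
  set SXp := ∑ i ∈ univ.filter (fun i : Fin (k + l) => k ≤ (i : ℕ)), x (w i) with hSXp
  set SXm := ∑ i ∈ univ.filter (fun i : Fin (k + l) => (i : ℕ) < k), x (w i) with hSXm
  set SYp := ∑ i ∈ univ.filter (fun i : Fin (k + l) => k ≤ (i : ℕ)), y (w i) with hSYp
  set SYm := ∑ i ∈ univ.filter (fun i : Fin (k + l) => (i : ℕ) < k), y (w i) with hSYm
  have e1 : ρ + 2 * x v * (SXp - SXm) ≤ σ := by
    rw [← xAx, ← dX]; exact r1
  have e2 : σ ≤ ρ + 2 * y v * (SYp - SYm) := by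
    have : σ = y ⬝ᵥ (adjMat G).mulVec y + 2 * y v * (SYp - SYm) := yBy.symm.trans dY
    rw [this]; linarith
  have key : 2 * x v * (SXp - SXm) ≤ 2 * y v * (SYp - SYm) := by linarith
  have hxv := hxpos v
  have hyv := hypos v
  have h0 : 0 ≤ 2 * x v * (SXp - SXm) :=
    mul_nonneg (by linarith) (by linarith)
  have h1 : 0 ≤ 2 * y v * (SYp - SYm) := le_trans h0 key
  constructor
  · nlinarith [h1, hyv]
  · intro hlt
    have h0' : 0 < 2 * x v * (SXp - SXm) := mul_pos (by linarith) (by linarith)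
    have h1' : 0 < 2 * y v * (SYp - SYm) := lt_of_lt_of_le h0' key
    nlinarith [h1', hyv]
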